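/- arXiv:1410.2420 — 2 statements merged into one kernel-verified Lean document; each statement's English description precedes it below -/
import Mathlib

section
/- Let p ≥ 5 be a prime and n ≥ 1 an even integer such that q = n·p + 1 is a prime number congruent to 1 or −1 modulo 5 (so that q splits in K and O_K/𝔮 has q elements for any prime ideal 𝔮 of O_K above q). Let a, b, c ∈ O_K satisfy a^p + b^p + c^p = 0, and let 𝔮 be a prime ideal of O_K above q such that v_𝔮(a·b·c) = 0. Then the polynomials X^n − 1 and (X+1)^n − 1 have a common root in the field O_K/𝔮; in particular q divides W_n. -/
open Polynomial

/-- `K = ℚ(√5)`, the real quadratic field obtained by adjoining `√5` to `ℚ`. -/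
noncomputable def K : IntermediateField ℚ ℝ := IntermediateField.adjoin ℚ {Real.sqrt 5}

/-- The Sylvester matrix of two polynomials `f, g` over `ℤ`, of size
`(g.natDegree + f.natDegree) × (g.natDegree + f.natDegree)`: the first
`g.natDegree` rows carry the (shifted) coefficients of `f` and the remaining
`f.natDegree` rows carry the (shifted) coefficients of `g`. -/
noncomputable def sylvester (f g : Polynomial ℤ) :
    Matrix (Fin (g.natDegree + f.natDegree)) (Fin (g.natDegree + f.natDegree)) ℤ :=
  Matrix.of fun i j =>
    if (i : ℕ) < g.natDegree then
      if (i : ℕ) ≤ (j : ℕ) ∧ (j : ℕ) ≤ (i : ℕ) + f.natDegree then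
        f.coeff (f.natDegree + i - j)
      else 0
    else
      if (i : ℕ) - g.natDegree ≤ (j : ℕ) ∧ (j : ℕ) ≤ (i : ℕ) - g.natDegree + g.natDegree then
        g.coeff (g.natDegree + ((i : ℕ) - g.natDegree) - j)
      else 0

/-- The resultant of two polynomials over `ℤ`: the determinant of their Sylvester matrix. -/
noncomputable def resultant (f g : Polynomial ℤ) : ℤ := (_root_.sylvester f g).det

/-- `W n` is the resultant of the polynomials `X ^ n - 1` and `(X + 1) ^ n - 1` in `ℤ[X]`. -/
noncomputable def W (n : ℕ) : ℤ := _root_.resultant (X ^ n - 1) ((X + 1) ^ n - 1)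

/-- `O_K`, the ring of integers of `K = ℚ(√5)`. -/
noncomputable abbrev OK : Type := NumberField.RingOfIntegers K

/-!
Since `q ≡ ±1 (mod 5)`, `5` is a square modulo `q`; as `10 · O_K ⊆ ℤ + ℤ√5`, the residue field
`O_K/𝔮` is then the prime field `𝔽_q`. Reducing the Fermat equation and dividing by `c^p` gives
`x^p + y^p + 1 = 0` with `x, y ∈ 𝔽_q^×`. Every `p`-th power in `𝔽_q^×` is an `n`-th root of unity
because `q - 1 = n p`, so `α = x^p` satisfies `α^n = 1` and, `n` being even,
`(α + 1)^n = (-y^p)^n = 1`. A common root modulo `q` of `X^n - 1` and `(X + 1)^n - 1` kills their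
resultant modulo `q`, since the resultant is a combination `f u + g v` of the two polynomials.
-/

open IntermediateField

theorem resultant_eq_polynomial_resultant (f g : ℤ[X]) :
    _root_.resultant f g = f.resultant g := by
  set e : Fin (f.natDegree + g.natDegree) ≃ Fin (g.natDegree + f.natDegree) :=
    (finCongr (add_comm _ _)).trans Fin.revPerm
  have he : ∀ i, ((e.symm i : Fin _) : ℕ) = g.natDegree + f.natDegree - 1 - i := fun i => by
    simp [e, Fin.val_rev]; omega
  -- `sylvester` is Mathlib's Sylvester matrix transposed, with rows and columns in reverse order
  have key : _root_.sylvester f g =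
      (Polynomial.sylvester f g f.natDegree g.natDegree).transpose.reindex e e := by
    ext i j
    simp only [_root_.sylvester, Polynomial.sylvester, Matrix.of_apply, Matrix.reindex_apply,
      Matrix.submatrix_apply, Matrix.transpose_apply]
    have hi := he i
    have hj := he j
    generalize e.symm i = k at hi ⊢
    generalize e.symm j = l at hj ⊢
    have := i.isLt
    induction k using Fin.addCases with
    | left k =>
      simp only [Fin.addCases_left, Fin.val_castAdd, Set.mem_Icc] at hi ⊢
      have := k.isLt
      split_ifs <;> first | rfl | omega | (congr 1; omega)
    | right k =>
      simp only [Fin.addCases_right, Fin.val_natAdd, Set.mem_Icc] at hi ⊢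
      split_ifs <;> first | rfl | omega | (congr 1; omega)
  rw [_root_.resultant, key, Matrix.det_reindex_self, Matrix.det_transpose, Polynomial.resultant]

theorem Polynomial.map_resultant_eq_zero_of_eval₂_eq_zero {R S : Type*} [CommRing R] [CommRing S]
    (φ : R →+* S) {f g : R[X]} (hdeg : f.natDegree ≠ 0 ∨ g.natDegree ≠ 0) {α : S}
    (hf : f.eval₂ φ α = 0) (hg : g.eval₂ φ α = 0) : φ (f.resultant g) = 0 := by
  obtain ⟨u, v, -, -, h⟩ := exists_mul_add_mul_eq_C_resultant f g le_rfl le_rfl hdeg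
  simpa [hf, hg] using (congrArg (eval₂ φ α) h).symm

theorem W_cast_eq_zero_of_common_root {S : Type*} [CommRing S] {n : ℕ} (hn : n ≠ 0) {α : S}
    (h₁ : α ^ n = 1) (h₂ : (α + 1) ^ n = 1) : (W n : S) = 0 := by
  rw [W, resultant_eq_polynomial_resultant]
  refine map_resultant_eq_zero_of_eval₂_eq_zero (Int.castRingHom S) (α := α) (.inl ?_) ?_ ?_
  · rw [← C_1, natDegree_X_pow_sub_C]
    exact hn
  · simp [h₁]
  · simp [eval₂_pow, h₂]

theorem exists_common_root_of_fermat {F : Type*} [Field F] [Fintype F] {n p : ℕ}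
    (hcard : Fintype.card F = n * p + 1) (hn : Even n) {x y z : F} (hx : x ≠ 0) (hy : y ≠ 0)
    (hz : z ≠ 0) (h : x ^ p + y ^ p + z ^ p = 0) : ∃ α : F, α ^ n = 1 ∧ (α + 1) ^ n = 1 := by
  have hpow : ∀ u : F, u ≠ 0 → (u ^ p) ^ n = 1 := fun u hu => by
    rw [← pow_mul, mul_comm, ← Nat.add_sub_cancel (n * p) 1, ← hcard]
    exact FiniteField.pow_card_sub_one_eq_one u hu
  refine ⟨(x / z) ^ p, hpow _ (div_ne_zero hx hz), ?_⟩
  have : (x / z) ^ p + 1 = -(y / z) ^ p := by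
    rw [div_pow, div_pow]
    field_simp [pow_ne_zero p hz]
    linear_combination h
  rw [this, hn.neg_pow]
  exact hpow _ (div_ne_zero hy hz)

theorem isSquare_five_zmod {q : ℕ} [Fact q.Prime] (hq : q % 5 = 1 ∨ q % 5 = 4) :
    IsSquare (5 : ZMod q) := by
  have : Fact (Nat.Prime 5) := ⟨Nat.prime_five⟩
  have hq5 : IsSquare (q : ZMod 5) := by
    rw [← ZMod.natCast_mod]
    rcases hq with hq | hq <;> rw [hq]
    exacts [⟨1, rfl⟩, ⟨2, rfl⟩]
  simpa using (ZMod.exists_sq_eq_prime_iff_of_mod_four_eq_one (by norm_num) (by omega)).1 hq5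

theorem ZMod.mem_range_castHom_of_sq_eq {R : Type*} [CommRing R] [IsDomain R] {q : ℕ} [CharP R q]
    {s : R} {d : ZMod q} (hd : IsSquare d) (hs : s ^ 2 = ZMod.castHom dvd_rfl R d) :
    s ∈ (ZMod.castHom dvd_rfl R).range := by
  obtain ⟨z, rfl⟩ := hd
  rw [map_mul, ← sq, sq_eq_sq_iff_eq_or_eq_neg] at hs
  rcases hs with rfl | rfl
  exacts [⟨z, rfl⟩, ⟨-z, map_neg _ _⟩]

theorem ZMod.castHom_surjective_of_forall_mul_eq {R : Type*} [CommRing R] [IsDomain R] {q : ℕ}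
    [Fact q.Prime] [CharP R q] {m : ℕ} (hm : (m : ZMod q) ≠ 0) {s : R}
    (hs : s ∈ (ZMod.castHom dvd_rfl R).range) (h : ∀ x : R, ∃ u v : ℤ, m * x = u + v * s) :
    Function.Surjective (ZMod.castHom dvd_rfl R) := by
  intro x
  obtain ⟨u, v, huv⟩ := h x
  obtain ⟨w, rfl⟩ := hs
  refine ⟨(m : ZMod q)⁻¹ * (u + v * w), mul_left_cancel₀ (?_ : (m : R) ≠ 0) ?_⟩
  · rwa [ne_eq, ← map_natCast (ZMod.castHom dvd_rfl R), map_eq_zero_iff _ (RingHom.injective _)]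
  · rw [huv, ← map_natCast (ZMod.castHom dvd_rfl R), ← map_mul, ← mul_assoc, mul_inv_cancel₀ hm]
    simp

theorem irreducible_X_sq_sub_five : Irreducible (X ^ 2 - C 5 : ℚ[X]) :=
  (X_pow_sub_C_irreducible_iff_of_prime Nat.prime_two).2 fun b hb =>
    (by norm_num : ¬ IsSquare (5 : ℚ)) ⟨b, by rw [← hb, sq]⟩

theorem minpoly_sqrt_five : minpoly ℚ √5 = X ^ 2 - C 5 :=
  (minpoly.eq_of_irreducible_of_monic irreducible_X_sq_sub_five (by simp)
    (monic_X_pow_sub_C _ two_ne_zero)).symm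

theorem isIntegral_sqrt_five : IsIntegral ℚ √5 :=
  ⟨X ^ 2 - C 5, monic_X_pow_sub_C _ two_ne_zero, by simp⟩

noncomputable def powerBasisK : PowerBasis ℚ K := adjoin.powerBasis isIntegral_sqrt_five

instance : FiniteDimensional ℚ K := powerBasisK.finite

theorem minpoly_gen_powerBasisK : minpoly ℚ powerBasisK.gen = X ^ 2 - C 5 :=
  (minpoly_gen ℚ √5).trans minpoly_sqrt_five

theorem powerBasisK_dim : powerBasisK.dim = 2 := by
  rw [← powerBasisK.natDegree_minpoly, minpoly_gen_powerBasisK, natDegree_X_pow_sub_C]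

theorem finrank_K : Module.finrank ℚ K = 2 :=
  powerBasisK.finrank.trans powerBasisK_dim

theorem gen_powerBasisK_sq : powerBasisK.gen ^ 2 = 5 := by
  have := minpoly.aeval ℚ powerBasisK.gen
  rw [minpoly_gen_powerBasisK] at this
  simpa [sub_eq_zero] using this

theorem trace_gen_powerBasisK : Algebra.trace ℚ K powerBasisK.gen = 0 := by
  rw [powerBasisK.trace_gen_eq_nextCoeff_minpoly, minpoly_gen_powerBasisK]
  simp [nextCoeff]

theorem exists_eq_add_mul_gen_powerBasisK (y : K) :
    ∃ r s : ℚ, y = algebraMap ℚ K r + algebraMap ℚ K s * powerBasisK.gen := by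
  obtain ⟨f, hf, rfl⟩ := powerBasisK.exists_eq_aeval y
  rw [powerBasisK_dim] at hf
  rw [eq_X_add_C_of_natDegree_le_one (by omega : f.natDegree ≤ 1)]
  exact ⟨f.coeff 0, f.coeff 1, by simp [add_comm]⟩

theorem ten_mul_eq_trace (y : K) :
    10 * y = 5 * algebraMap ℚ K (Algebra.trace ℚ K y) +
      algebraMap ℚ K (Algebra.trace ℚ K (y * powerBasisK.gen)) * powerBasisK.gen := by
  obtain ⟨r, s, rfl⟩ := exists_eq_add_mul_gen_powerBasisK y
  have hmul : (algebraMap ℚ K r + algebraMap ℚ K s * powerBasisK.gen) * powerBasisK.gen =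
      algebraMap ℚ K (5 * s) + algebraMap ℚ K r * powerBasisK.gen := by
    rw [map_mul, map_ofNat]
    linear_combination algebraMap ℚ K s * gen_powerBasisK_sq
  rw [hmul]
  simp only [map_add, ← Algebra.smul_def, map_smul, Algebra.trace_algebraMap,
    trace_gen_powerBasisK, finrank_K]
  simp [Algebra.smul_def]
  ring

theorem isIntegral_gen_powerBasisK : IsIntegral ℤ powerBasisK.gen :=
  ⟨X ^ 2 - C 5, monic_X_pow_sub_C _ two_ne_zero, by simp [gen_powerBasisK_sq]⟩

noncomputable def sqrtFive : OK :=
  ⟨powerBasisK.gen, (mem_integralClosure_iff ℤ K).2 isIntegral_gen_powerBasisK⟩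

theorem algebraMap_sqrtFive : algebraMap OK K sqrtFive = powerBasisK.gen := rfl

theorem sqrtFive_sq : sqrtFive ^ 2 = 5 :=
  NumberField.RingOfIntegers.coe_injective (by
    rw [map_pow, algebraMap_sqrtFive, gen_powerBasisK_sq, map_ofNat])

theorem exists_ten_mul_eq (x : OK) : ∃ u v : ℤ, 10 * x = u + v * sqrtFive := by
  have hx := NumberField.RingOfIntegers.isIntegral_coe x
  obtain ⟨u, hu⟩ := IsIntegrallyClosed.isIntegral_iff.1 (Algebra.isIntegral_trace (L := ℚ) hx)
  obtain ⟨v, hv⟩ := IsIntegrallyClosed.isIntegral_iff.1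
    (Algebra.isIntegral_trace (L := ℚ) (hx.mul isIntegral_gen_powerBasisK))
  refine ⟨5 * u, v, NumberField.RingOfIntegers.coe_injective ?_⟩
  have := ten_mul_eq_trace (algebraMap OK K x)
  rw [← hu, ← hv] at this
  rw [map_mul, map_add, map_mul, map_ofNat, map_intCast, map_intCast, algebraMap_sqrtFive, this]
  simp

theorem castHom_quotient_surjective_of_mod_five {q : ℕ} [Fact q.Prime] (hq : q % 5 = 1 ∨ q % 5 = 4)
    (𝔮 : Ideal OK) [𝔮.IsPrime] [CharP (OK ⧸ 𝔮) q] :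
    Function.Surjective (ZMod.castHom dvd_rfl (OK ⧸ 𝔮)) := by
  have h10 : ((10 : ℕ) : ZMod q) ≠ 0 := by
    rw [ne_eq, ZMod.natCast_eq_zero_iff]
    intro hdvd
    have := (Fact.out : q.Prime).two_le
    have := Nat.le_of_dvd (by norm_num) hdvd
    interval_cases q <;> omega
  refine ZMod.castHom_surjective_of_forall_mul_eq h10 (s := Ideal.Quotient.mk 𝔮 sqrtFive)
    (ZMod.mem_range_castHom_of_sq_eq (isSquare_five_zmod hq) ?_) fun x => ?_
  · rw [← map_pow, sqrtFive_sq, map_ofNat, map_ofNat]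
  obtain ⟨x, rfl⟩ := Ideal.Quotient.mk_surjective x
  obtain ⟨u, v, h⟩ := exists_ten_mul_eq x
  exact ⟨u, v, by
    simpa [map_ofNat (Ideal.Quotient.mk 𝔮) 10] using congrArg (Ideal.Quotient.mk 𝔮) h⟩

theorem common_root_mod_q_of_good_reduction_general (p n : ℕ)
    (hn1 : 1 ≤ n) (hneven : n % 2 = 0)
    (hq : (n * p + 1).Prime) (hq5 : (n * p + 1) % 5 = 1 ∨ (n * p + 1) % 5 = 4)
    (a b c : OK) (hfermat : a ^ p + b ^ p + c ^ p = 0)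
    (𝔮 : Ideal OK) (h𝔮 : 𝔮.IsPrime) (h𝔮q : ((n * p + 1 : ℕ) : OK) ∈ 𝔮)
    (habc : a * b * c ∉ 𝔮) :
    (∃ α : OK ⧸ 𝔮, α ^ n = 1 ∧ (α + (1 : OK ⧸ 𝔮)) ^ n = 1) ∧
      ((n * p + 1 : ℕ) : ℤ) ∣ W n := by
  have := h𝔮
  have : Fact (n * p + 1).Prime := ⟨hq⟩
  have : CharP (OK ⧸ 𝔮) (n * p + 1) :=
    (CharP.charP_iff_prime_eq_zero hq).2 (by simpa using Ideal.Quotient.eq_zero_iff_mem.2 h𝔮q)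
  let e : ZMod (n * p + 1) ≃+* OK ⧸ 𝔮 := RingEquiv.ofBijective _
    ⟨(ZMod.castHom dvd_rfl _).injective, castHom_quotient_surjective_of_mod_five hq5 𝔮⟩
  let red : OK →+* ZMod (n * p + 1) := e.symm.toRingHom.comp (Ideal.Quotient.mk 𝔮)
  obtain ⟨⟨ha, hb⟩, hc⟩ : (red a ≠ 0 ∧ red b ≠ 0) ∧ red c ≠ 0 := by
    simpa [red, Ideal.Quotient.eq_zero_iff_mem, Ideal.IsPrime.mul_mem_iff_mem_or_mem, not_or]
      using habc
  obtain ⟨α, hα, hα1⟩ := exists_common_root_of_fermat (ZMod.card _) (Nat.even_iff.2 hneven)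
    ha hb hc (by simpa using congrArg red hfermat)
  refine ⟨⟨e α, by rw [← map_pow, hα, map_one], ?_⟩, ?_⟩
  · rw [← map_one e, ← map_add, ← map_pow, hα1]
  · exact (ZMod.intCast_zmod_eq_zero_iff_dvd _ _).1
      (W_cast_eq_zero_of_common_root (by omega) hα hα1)

set_option maxHeartbeats 1000000 in
set_option synthInstance.maxHeartbeats 400000 in
/-- **Lemma 4 (key step).** Let `p ≥ 5` be prime, `n ≥ 1` even, and suppose
`q = n·p + 1` is a prime congruent to `±1 (mod 5)`.  Let `a, b, c ∈ O_K` with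
`a^p + b^p + c^p = 0` and let `𝔮` be a prime ideal of `O_K` above `q` with
`v_𝔮(a·b·c) = 0`.  Then `X^n - 1` and `(X + 1)^n - 1` have a common root in
`O_K/𝔮`; in particular `q` divides `W n`. -/
theorem common_root_mod_q_of_good_reduction (p n : ℕ) (hp : p.Prime) (hp5 : 5 ≤ p)
    (hn1 : 1 ≤ n) (hneven : n % 2 = 0)
    (hq : (n * p + 1).Prime) (hq5 : (n * p + 1) % 5 = 1 ∨ (n * p + 1) % 5 = 4)
    (a b c : OK) (hfermat : a ^ p + b ^ p + c ^ p = 0)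
    (𝔮 : Ideal OK) (h𝔮 : 𝔮.IsPrime) (h𝔮q : ((n * p + 1 : ℕ) : OK) ∈ 𝔮)
    (habc : a * b * c ∉ 𝔮) :
    (∃ α : OK ⧸ 𝔮, α ^ n = 1 ∧ (α + (1 : OK ⧸ 𝔮)) ^ n = 1) ∧
      ((n * p + 1 : ℕ) : ℤ) ∣ W n :=
  common_root_mod_q_of_good_reduction_general p n hn1 hneven hq hq5 a b c hfermat 𝔮 h𝔮 h𝔮q habc
end

section
/- Let A, B, C be elements of O_K with A + B + C = 0, A ≡ 1 (mod 4·O_K) and B ≡ u² + 2u (mod 4·O_K). Then C ≡ u + 2 (mod 4·O_K), and, denoting by v the valuation on O_K attached to the prime ideal 2·O_K, one has v(A² + A·B + B²) = v(A² + A·C + C²) = v(B² + B·C + C²) = 1. -/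
/-! Modulo `4` one has `A ≡ 1` and `B ≡ 1 + 3u`, so `A² + AB + B² ≡ 12 + 18u ≡ 2u`, and `C ≡ u + 2`.
Since `A + B + C = 0`, the three forms `X² + XY + Y²` coincide. As `u` is a unit and `2` is not
(a unit of `O_K` lying in `ℤ` is a unit of `ℤ`, the extension being integral), each form is `2`
times a unit modulo `4`, hence has valuation exactly `1`. -/

open Polynomial

lemma sqrt5_mem : Real.sqrt 5 ∈ K :=
  IntermediateField.subset_adjoin ℚ {Real.sqrt 5} rfl

/-- `(1 + √5)/2` as an element of `K`. -/
noncomputable def uK : K :=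
  ⟨(1 + Real.sqrt 5) / 2,
    div_mem (add_mem (one_mem K) sqrt5_mem)
      (by exact_mod_cast SubfieldClass.ratCast_mem K 2)⟩

lemma uK_integral : IsIntegral ℤ uK := by
  have h : IsIntegral ℤ ((1 + Real.sqrt 5) / 2 : ℝ) := by
    refine ⟨X ^ 2 - X - 1, by monicity!, ?_⟩
    have h5 : Real.sqrt 5 ^ 2 = 5 := Real.sq_sqrt (by norm_num)
    simp only [eval₂_sub, eval₂_pow, eval₂_X, eval₂_one]
    nlinarith [h5]
  rw [show ((1 + Real.sqrt 5) / 2 : ℝ) = algebraMap K ℝ uK from rfl] at h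
  exact (isIntegral_algebraMap_iff (algebraMap K ℝ).injective).mp h

/-- `u = (1 + √5)/2` as an element of `O_K`; it satisfies `u ^ 2 = 1 + u`. -/
noncomputable def u : OK := ⟨uK, uK_integral⟩

theorem isUnit_of_isUnit_algebraMap_of_isIntegral {R S : Type*} [CommRing R] [CommRing S]
    [Algebra R S] [Algebra.IsIntegral R S] [FaithfulSMul R S] {r : R}
    (h : IsUnit (algebraMap R S r)) : IsUnit r := by
  by_contra hr
  obtain ⟨P, hP, hrP⟩ := exists_max_ideal_of_mem_nonunits hr
  obtain ⟨Q, hQ, hQP⟩ := Ideal.exists_ideal_over_maximal_of_isIntegral (S := S) P (by simp)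
  exact hQ.ne_top (Q.eq_top_of_isUnit_mem (by rwa [← Ideal.mem_comap, hQP]) h)

theorem dvd_and_not_sq_dvd_of_sq_dvd_sub_mul {R : Type*} [CommRing R] [IsDomain R] {p x e : R}
    (hp : p ≠ 0) (hx : ¬ p ∣ x) (he : p ^ 2 ∣ e - p * x) : p ∣ e ∧ ¬ p ^ 2 ∣ e := by
  refine ⟨by simpa using dvd_add ((dvd_pow_self p two_ne_zero).trans he) (dvd_mul_right p x), ?_⟩
  intro hpe
  have : p * p ∣ p * x := by simpa [sq] using dvd_sub hpe he
  exact hx ((mul_dvd_mul_iff_left hp).mp this)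

section

variable {R : Type*} [CommRing R] {u A B C : R}

theorem four_dvd_sub_of_add_add_eq_zero (hu : u ^ 2 = 1 + u) (hsum : A + B + C = 0)
    (hA : (4 : R) ∣ A - 1) (hB : (4 : R) ∣ B - (u ^ 2 + 2 * u)) : (4 : R) ∣ C - (u + 2) := by
  obtain ⟨a, ha⟩ := hA
  obtain ⟨b, hb⟩ := hB
  exact ⟨-1 - u - a - b, by linear_combination hsum - ha - hb - hu⟩

theorem two_sq_dvd_sq_add_mul_add_sq_sub_two_mul (hu : u ^ 2 = 1 + u)
    (hA : (4 : R) ∣ A - 1) (hB : (4 : R) ∣ B - (u ^ 2 + 2 * u)) :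
    (2 : R) ^ 2 ∣ A ^ 2 + A * B + B ^ 2 - 2 * u := by
  obtain ⟨a, ha⟩ := hA
  obtain ⟨b, hb⟩ := hB
  exact ⟨3 + 4 * u + 3 * b + 6 * b * u + 4 * b ^ 2 + 3 * a + 3 * a * u + 4 * a * b + 4 * a ^ 2,
    by grind⟩

end

lemma u_sq : u ^ 2 = 1 + u := by
  apply NumberField.RingOfIntegers.coe_injective
  apply Subtype.ext
  change ((1 + Real.sqrt 5) / 2) ^ 2 = 1 + (1 + Real.sqrt 5) / 2
  linear_combination Real.sq_sqrt (show (0 : ℝ) ≤ 5 by norm_num) / 4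

lemma isUnit_u : IsUnit u :=
  .of_mul_eq_one (u - 1) (by linear_combination u_sq)

lemma not_isUnit_two : ¬ IsUnit (2 : OK) := fun h ↦ by
  simpa [Int.isUnit_iff] using
    isUnit_of_isUnit_algebraMap_of_isIntegral (R := ℤ) (S := OK) (r := 2) (by simpa using h)

/-- **Remark after Lemma 3.** Let `A, B, C ∈ O_K` with `A + B + C = 0`,
`A ≡ 1 (mod 4·O_K)` and `B ≡ u² + 2u (mod 4·O_K)`.  Then `C ≡ u + 2 (mod 4·O_K)`
and, for the valuation `v` attached to the prime ideal `2·O_K` (so `v(x) = 1`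
iff `2 ∣ x` and `4 ∤ x`), one has
`v(A² + AB + B²) = v(A² + AC + C²) = v(B² + BC + C²) = 1`. -/
theorem remark_valuations (A B C : OK) (hsum : A + B + C = 0)
    (hA : (4 : OK) ∣ A - 1) (hB : (4 : OK) ∣ B - (u ^ 2 + 2 * u)) :
    ((4 : OK) ∣ C - (u + 2)) ∧
    ((2 : OK) ∣ A ^ 2 + A * B + B ^ 2 ∧ ¬ (2 : OK) ^ 2 ∣ A ^ 2 + A * B + B ^ 2) ∧
    ((2 : OK) ∣ A ^ 2 + A * C + C ^ 2 ∧ ¬ (2 : OK) ^ 2 ∣ A ^ 2 + A * C + C ^ 2) ∧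
    ((2 : OK) ∣ B ^ 2 + B * C + C ^ 2 ∧ ¬ (2 : OK) ^ 2 ∣ B ^ 2 + B * C + C ^ 2) := by
  have h2u : ¬ (2 : OK) ∣ u := fun h ↦ not_isUnit_two (isUnit_of_dvd_unit h isUnit_u)
  have hAB := dvd_and_not_sq_dvd_of_sq_dvd_sub_mul two_ne_zero h2u
    (two_sq_dvd_sq_add_mul_add_sq_sub_two_mul u_sq hA hB)
  have hAC : A ^ 2 + A * C + C ^ 2 = A ^ 2 + A * B + B ^ 2 := by
    linear_combination (C - B) * hsum
  have hBC : B ^ 2 + B * C + C ^ 2 = A ^ 2 + A * B + B ^ 2 := by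
    linear_combination (C - A) * hsum
  exact ⟨four_dvd_sub_of_add_add_eq_zero u_sq hsum hA hB, hAB, hAC ▸ hAB, hBC ▸ hAB⟩
end
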